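/- arXiv:1703.10047 — 3 statements merged into one kernel-verified Lean document; each statement's English description precedes it below -/
import Mathlib

section
/- Let $\mathbb{K}$ be a number field and let $\beta_1, \ldots, \beta_s \in \mathbb{K}$ be such that none of them is zero or a root of unity. Then there is a constant $C > 0$ depending only on $\beta_1, \ldots, \beta_s$ such that, for all $x \geq 1$, the number of primes $p \leq x$ for which some $\beta_i$ has multiplicative order less than $p^{1/4}$ modulo some prime ideal of $\mathcal{O}_\mathbb{K}$ lying above $p$ is at most $C x^{1/2}$. -/
/-!
Write `b = u / d` with `u, d ∈ 𝓞 K`. If `b ^ m ≡ 1` modulo a prime `v` above `p`, then `v` divides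
`u ^ m - d ^ m ≠ 0`, so `p` divides its norm. Since every archimedean absolute value of
`u ^ m - d ^ m` is at most `(|u|_w + |d|_w) ^ m`, this norm is at most `2 ^ (k m)` with `k`
depending only on `b`, so it has at most `k m` prime factors. Summing over `m ≤ x ^ (1/4)` and over
the `β i` bounds the number of exceptional primes by `O(x ^ (1/2))`.
-/

open IsDedekindDomain NumberField

theorem Ideal.prime_dvd_norm_of_mem {S : Type*} [CommRing S] [IsDedekindDomain S]
    [Module.Free ℤ S] [Module.Finite ℤ S] {P : Ideal S} (hP : P ≠ ⊤) {p : ℕ} (hp : p.Prime)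
    (hpP : (p : S) ∈ P) {a : S} (ha : a ∈ P) : (p : ℤ) ∣ Algebra.norm ℤ a := by
  have hdvd : absNorm P ∣ p ^ Module.finrank ℤ S := by
    rw [← absNorm_span_natCast]
    exact absNorm_dvd_absNorm_of_le ((span_singleton_le_iff_mem P).mpr hpP)
  obtain ⟨j, -, hj⟩ := (Nat.dvd_prime_pow hp).mp hdvd
  have hj0 : j ≠ 0 := by
    rintro rfl
    exact hP (absNorm_eq_one_iff.mp (by simpa using hj))
  exact (Int.natCast_dvd_natCast.mpr (hj ▸ dvd_pow_self p hj0)).trans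
    (absNorm_dvd_norm_of_mem ha)

theorem Nat.card_primeFactors_le_of_le_two_pow {N n : ℕ} (hN : N ≠ 0) (h : N ≤ 2 ^ n) :
    N.primeFactors.card ≤ n := by
  refine (Nat.pow_le_pow_iff_right one_lt_two).mp (le_trans ?_ h)
  calc 2 ^ N.primeFactors.card ≤ ∏ p ∈ N.primeFactors, p :=
        Finset.pow_card_le_prod _ _ _ fun p hp => (Nat.prime_of_mem_primeFactors hp).two_le
    _ ≤ N := Nat.le_of_dvd (Nat.pos_of_ne_zero hN) (Nat.prod_primeFactors_dvd N)

namespace NumberField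

variable {K : Type*} [Field K] [NumberField K]

theorem abs_norm_pow_sub_pow_le (x y : K) {m : ℕ} (hm : m ≠ 0) :
    |Algebra.norm ℚ (x ^ m - y ^ m)| ≤ (∏ w : InfinitePlace K, (w x + w y) ^ w.mult) ^ m := by
  have hw : ∀ w : InfinitePlace K, w (x ^ m - y ^ m) ≤ (w x + w y) ^ m := fun w =>
    calc w (x ^ m - y ^ m) ≤ w (x ^ m) + w (y ^ m) := w.1.sub_le_add _ _
      _ = w x ^ m + w y ^ m := by rw [map_pow, map_pow]
      _ ≤ (w x + w y) ^ m := pow_add_pow_le (apply_nonneg w x) (apply_nonneg w y) hm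
  rw [← InfinitePlace.prod_eq_abs_norm, ← Finset.prod_pow]
  refine Finset.prod_le_prod (fun w _ => pow_nonneg (apply_nonneg w _) _) fun w _ => ?_
  rw [← pow_mul, mul_comm, pow_mul]
  exact pow_le_pow_left₀ (apply_nonneg w _) (hw w) _

theorem RingOfIntegers.exists_natAbs_norm_pow_sub_pow_le (u d : 𝓞 K) :
    ∃ k : ℕ, ∀ m : ℕ, m ≠ 0 → (Algebra.norm ℤ (u ^ m - d ^ m)).natAbs ≤ 2 ^ (k * m) := by
  obtain ⟨k, hk⟩ := pow_unbounded_of_one_lt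
    (∏ w : InfinitePlace K, (w (u : K) + w (d : K)) ^ w.mult) one_lt_two
  refine ⟨k, fun m hm => ?_⟩
  have hnorm : ((Algebra.norm ℤ (u ^ m - d ^ m)).natAbs : ℝ)
      = (|Algebra.norm ℚ ((u : K) ^ m - (d : K) ^ m)| : ℚ) := by
    rw [Nat.cast_natAbs, Int.cast_abs, ← Rat.cast_intCast, Algebra.coe_norm_int, Rat.cast_abs]
    push_cast
    rfl
  have hbound : ((Algebra.norm ℤ (u ^ m - d ^ m)).natAbs : ℝ) ≤ ((2 : ℝ) ^ k) ^ m := by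
    rw [hnorm]
    exact (abs_norm_pow_sub_pow_le _ _ hm).trans
      (pow_le_pow_left₀ (Finset.prod_nonneg fun w _ => by positivity) hk.le m)
  rw [pow_mul]
  exact_mod_cast hbound

def primesBelowZeros (z : K) : Set ℕ :=
  {p | p.Prime ∧ ∃ v : HeightOneSpectrum (𝓞 K), (p : 𝓞 K) ∈ v.asIdeal ∧ v.valuation K z < 1}

theorem primesBelowZeros_subset_primeFactors {z : K} {c d : 𝓞 K} (hc : c ≠ 0)
    (hcd : algebraMap (𝓞 K) K c = algebraMap (𝓞 K) K d * z) :
    primesBelowZeros z ⊆ (Algebra.norm ℤ c).natAbs.primeFactors := by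
  rintro p ⟨hp, v, hpv, hz⟩
  have hcv : v.valuation K (algebraMap (𝓞 K) K c) < 1 := by
    rw [hcd, map_mul]
    exact (mul_le_of_le_one_left' (v.valuation_le_one d)).trans_lt hz
  refine Nat.mem_primeFactors.mpr ⟨hp, ?_, ?_⟩
  · exact Int.natCast_dvd.mp (Ideal.prime_dvd_norm_of_mem v.isPrime.ne_top hp hpv
      ((v.valuation_lt_one_iff_mem c).mp hcv))
  · simpa [Algebra.norm_eq_zero_iff] using hc

theorem exists_algebraMap_eq_mul (z : K) :
    ∃ c d : 𝓞 K, d ≠ 0 ∧ algebraMap (𝓞 K) K c = algebraMap (𝓞 K) K d * z := by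
  obtain ⟨⟨d, hd⟩, c, hc⟩ := IsLocalization.exists_integer_multiple (nonZeroDivisors (𝓞 K)) z
  exact ⟨c, d, nonZeroDivisors.ne_zero hd, by rw [hc, Algebra.smul_def]⟩

theorem primesBelowZeros_finite {z : K} (hz : z ≠ 0) : (primesBelowZeros z).Finite := by
  obtain ⟨c, d, hd, hcd⟩ := exists_algebraMap_eq_mul z
  have hc : c ≠ 0 := by
    rintro rfl
    rw [map_zero, eq_comm, mul_eq_zero] at hcd
    exact hcd.elim (fun h => hd (by simpa using h)) hz
  exact (Finset.finite_toSet _).subset (primesBelowZeros_subset_primeFactors hc hcd)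

theorem exists_ncard_primesBelowZeros_pow_sub_one_le {b : K}
    (hb : ∀ m : ℕ, 0 < m → b ^ m ≠ 1) :
    ∃ k : ℕ, ∀ m : ℕ, 0 < m → (primesBelowZeros (b ^ m - 1)).ncard ≤ k * m := by
  obtain ⟨u, d, hd, hud⟩ := exists_algebraMap_eq_mul b
  obtain ⟨k, hk⟩ := RingOfIntegers.exists_natAbs_norm_pow_sub_pow_le u d
  refine ⟨k, fun m hm => ?_⟩
  have hmul :
      algebraMap (𝓞 K) K (u ^ m - d ^ m) = algebraMap (𝓞 K) K (d ^ m) * (b ^ m - 1) := by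
    rw [map_sub, map_pow, map_pow, hud]
    ring
  have hne : u ^ m - d ^ m ≠ 0 := by
    intro h
    rw [h, map_zero, eq_comm, mul_eq_zero, sub_eq_zero] at hmul
    exact hmul.elim (fun h0 => hd (by simpa [hm.ne'] using h0)) (hb m hm)
  calc (primesBelowZeros (b ^ m - 1)).ncard
      ≤ ((Algebra.norm ℤ (u ^ m - d ^ m)).natAbs.primeFactors : Set ℕ).ncard :=
        Set.ncard_le_ncard (primesBelowZeros_subset_primeFactors hne hmul) (Finset.finite_toSet _)
    _ ≤ k * m := by
      rw [Set.ncard_coe_finset]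
      exact Nat.card_primeFactors_le_of_le_two_pow (by simpa [Algebra.norm_eq_zero_iff] using hne)
        (hk m hm.ne')

/-- The primes `p` such that `b` has multiplicative order at most `M` modulo a prime above `p`. -/
def smallOrderPrimes (b : K) (M : ℕ) : Set ℕ :=
  ⋃ m ∈ Finset.Icc 1 M, primesBelowZeros (b ^ m - 1)

theorem smallOrderPrimes_finite {b : K} (hb : ∀ m : ℕ, 0 < m → b ^ m ≠ 1) (M : ℕ) :
    (smallOrderPrimes b M).Finite :=
  (Finset.finite_toSet _).biUnion fun m hm =>
    primesBelowZeros_finite (sub_ne_zero.mpr (hb m (Finset.mem_Icc.mp hm).1))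

theorem exists_ncard_smallOrderPrimes_le {b : K} (hb : ∀ m : ℕ, 0 < m → b ^ m ≠ 1) :
    ∃ k : ℕ, ∀ M : ℕ, (smallOrderPrimes b M).ncard ≤ k * M ^ 2 := by
  obtain ⟨k, hk⟩ := exists_ncard_primesBelowZeros_pow_sub_one_le hb
  refine ⟨k, fun M => ?_⟩
  calc (smallOrderPrimes b M).ncard
      ≤ ∑ m ∈ Finset.Icc 1 M, (primesBelowZeros (b ^ m - 1)).ncard :=
        Finset.set_ncard_biUnion_le _ _
    _ ≤ ∑ _m ∈ Finset.Icc 1 M, k * M := Finset.sum_le_sum fun m hm =>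
        (hk m (Finset.mem_Icc.mp hm).1).trans (Nat.mul_le_mul_left k (Finset.mem_Icc.mp hm).2)
    _ = k * M ^ 2 := by
        rw [Finset.sum_const, Nat.card_Icc, add_tsub_cancel_right, smul_eq_mul]; ring

theorem exists_ncard_iUnion_smallOrderPrimes_le {ι : Type*} [Fintype ι] {β : ι → K}
    (hβ : ∀ i, ∀ m : ℕ, 0 < m → β i ^ m ≠ 1) :
    ∃ k : ℕ, ∀ M : ℕ, (⋃ i, smallOrderPrimes (β i) M).ncard ≤ k * M ^ 2 := by
  choose k hk using fun i => exists_ncard_smallOrderPrimes_le (hβ i)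
  refine ⟨∑ i, k i, fun M => ?_⟩
  calc (⋃ i, smallOrderPrimes (β i) M).ncard ≤ ∑ i, (smallOrderPrimes (β i) M).ncard :=
        Set.ncard_iUnion_le_of_fintype _
    _ ≤ ∑ i, k i * M ^ 2 := Finset.sum_le_sum fun i _ => hk i M
    _ = (∑ i, k i) * M ^ 2 := Finset.sum_mul _ _ _ |>.symm

end NumberField

theorem small_order_primes_are_rare_general (K : Type) [Field K] [NumberField K]
    (s : ℕ) (β : Fin s → K)
    (hβru : ∀ i, ∀ k : ℕ, 0 < k → β i ^ k ≠ 1) :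
    ∃ C : ℝ, 0 < C ∧ ∀ x : ℝ, 1 ≤ x →
      (({p : ℕ | p.Prime ∧ (p : ℝ) ≤ x ∧
          ∃ v : HeightOneSpectrum (NumberField.RingOfIntegers K),
            (p : NumberField.RingOfIntegers K) ∈ v.asIdeal ∧
            ∃ i : Fin s, ∃ m : ℕ, 0 < m ∧ (m : ℝ) < (p : ℝ) ^ ((1 : ℝ) / 4) ∧
              v.valuation K (β i ^ m - 1) < 1}).ncard : ℝ) ≤ C * x ^ ((1 : ℝ) / 2) := by
  obtain ⟨k, hk⟩ := exists_ncard_iUnion_smallOrderPrimes_le hβru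
  refine ⟨k + 1, by positivity, fun x hx => ?_⟩
  set M := ⌊x ^ ((1 : ℝ) / 4)⌋₊
  have hM : (M : ℝ) ^ 2 ≤ x ^ ((1 : ℝ) / 2) := by
    calc (M : ℝ) ^ 2 ≤ (x ^ ((1 : ℝ) / 4)) ^ 2 := by gcongr; exact Nat.floor_le (by positivity)
      _ = x ^ ((1 : ℝ) / 2) := by
        rw [← Real.rpow_natCast, ← Real.rpow_mul (by positivity)]; norm_num
  refine (Nat.cast_le.mpr (Set.ncard_le_ncard (t := ⋃ i, smallOrderPrimes (β i) M) ?_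
    (Set.finite_iUnion fun i => smallOrderPrimes_finite (hβru i) M))).trans ?_
  · rintro p ⟨hp, hpx, v, hpv, i, m, hm, hmp, hv⟩
    have hmM : m ≤ M := Nat.le_floor (hmp.le.trans (by gcongr))
    simp only [smallOrderPrimes, Set.mem_iUnion]
    exact ⟨i, m, Finset.mem_Icc.mpr ⟨hm, hmM⟩, hp, v, hpv, hv⟩
  · calc ((⋃ i, smallOrderPrimes (β i) M).ncard : ℝ) ≤ k * (M : ℝ) ^ 2 := by
          exact_mod_cast hk M
      _ ≤ (k + 1) * x ^ ((1 : ℝ) / 2) := by gcongr; linarith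

/-- **Lemma (`lem:ponequarter`, Corvaja–Zannier).**
Let `β₁, …, β_s` be elements of a number field `K`, none of which is zero or a root of
unity. Then the number of primes `p ≤ x` such that some `β i` has multiplicative order
less than `p^(1/4)` modulo some prime ideal of `𝓞 K` lying above `p` is `O(x^(1/2))`,
where the implied constant depends only on `β₁, …, β_s`. Here "`β` has order less than
`B` modulo the prime `v`" is expressed as: there is `0 < m < B` with `β^m ≡ 1` modulo
`v`, i.e. the `v`-adic valuation of `β^m - 1` is `< 1`. -/
theorem small_order_primes_are_rare (K : Type) [Field K] [NumberField K]
    (s : ℕ) (β : Fin s → K) (hβ0 : ∀ i, β i ≠ 0)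
    (hβru : ∀ i, ∀ k : ℕ, 0 < k → β i ^ k ≠ 1) :
    ∃ C : ℝ, 0 < C ∧ ∀ x : ℝ, 1 ≤ x →
      (({p : ℕ | p.Prime ∧ (p : ℝ) ≤ x ∧
          ∃ v : HeightOneSpectrum (NumberField.RingOfIntegers K),
            (p : NumberField.RingOfIntegers K) ∈ v.asIdeal ∧
            ∃ i : Fin s, ∃ m : ℕ, 0 < m ∧ (m : ℝ) < (p : ℝ) ^ ((1 : ℝ) / 4) ∧
              v.valuation K (β i ^ m - 1) < 1}).ncard : ℝ) ≤ C * x ^ ((1 : ℝ) / 2) :=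
  small_order_primes_are_rare_general K s β hβru
end

section
/- Let $q$ be a prime power, let $\mathbb{F}_q$ be a finite field with $q$ elements, let $r \geq 2$, let $c_1, \ldots, c_r, a_1, \ldots, a_r \in \mathbb{F}_q^*$, and let $N$ be the minimum of the multiplicative orders of the elements $a_i/a_j$ for $i \neq j$ in $\mathbb{F}_q^*$. Then the number of integers $m \in [0, q-2]$ such that $\sum_{i=1}^r c_i a_i^m = 0$ is at most $4(q-1) N^{-1/2^{r-2}}$. -/
/-!
Exponents are read in `ZMod n`, where `n = q - 1` kills every unit, and the zero set `Z` of
`m ↦ ∑ cᵢ aᵢ ^ m` is bounded by induction on the number `r` of terms, in the multiplicative form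
`|Z| ^ 2 ^ (r - 2) * N ≤ (4 n) ^ 2 ^ (r - 2)`. For `r = 2` the zero set is a coset of the kernel
of `d ↦ (a₀ / a₁) ^ d`, so `|Z| ≤ n / N`. For more terms, `|Z|² = ∑_d |Z ∩ (Z - d)|`. If no
`aᵢ ^ d` equals `a_last ^ d`, then `Z ∩ (Z - d)` lies in the zero set of the `(r - 1)`-term sum
with coefficients `cᵢ (aᵢ ^ d - a_last ^ d)`, which the induction hypothesis bounds; the other
shifts `d` number at most `(r - 1) n / N`. Hence `|Z|² ≤ (r - 1) n |Z| / N + n B`, where `B`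
bounds `|Z ∩ (Z - d)|` over the good shifts; this halves the exponent of `N` in the bound.
-/

open Finset

theorem Nat.add_two_le_two_pow_two_pow (s : ℕ) : s + 2 ≤ 2 ^ 2 ^ s :=
  calc s + 2 ≤ 2 ^ (s + 1) := Nat.lt_two_pow_self
    _ ≤ 2 ^ 2 ^ s := Nat.pow_le_pow_right two_pos Nat.lt_two_pow_self

theorem pow_mul_le_of_mul_le_of_sixteen_pow_lt {K w m N : ℕ} (hK : 0 < K) (hN : 16 ^ K < N)
    (h : w * N ≤ 2 ^ (K + 1) * m) : w ^ K * N ≤ (16 * m) ^ K := by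
  obtain ⟨k, hk⟩ : ∃ k, K = k + 1 := ⟨K - 1, by omega⟩
  refine Nat.le_of_mul_le_mul_right ?_ (Nat.pow_pos (hN.trans_le' (Nat.zero_le _)) : 0 < N ^ k)
  calc w ^ K * N * N ^ k = (w * N) ^ K := by rw [mul_assoc, ← pow_succ', ← hk, mul_pow]
    _ ≤ (2 ^ (K + 1) * m) ^ K := by gcongr
    _ = 2 ^ ((K + 1) * K) * m ^ K := by rw [mul_pow, pow_mul]
    _ ≤ 16 ^ K * (16 ^ K) ^ k * m ^ K := by
        rw [← pow_succ', ← hk, ← pow_mul, show (16 : ℕ) = 2 ^ 4 by norm_num, ← pow_mul]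
        exact Nat.mul_le_mul_right _ (Nat.pow_le_pow_right two_pos (by nlinarith))
    _ = (16 * m) ^ K * (16 ^ K) ^ k := by rw [mul_right_comm, ← mul_pow]
    _ ≤ (16 * m) ^ K * N ^ k := by gcongr

theorem pow_two_pow_succ_mul_le_of_sq_mul_le {s n z B N : ℕ} (hN : 0 < N) (hz : z ≤ n)
    (hB : B ^ 2 ^ s * N ≤ (4 * n) ^ 2 ^ s) (h : z * z * N ≤ (s + 2) * n * z + n * B * N) :
    z ^ 2 ^ (s + 1) * N ≤ (4 * n) ^ 2 ^ (s + 1) := by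
  set K := 2 ^ s with hK
  rw [pow_succ, pow_mul', pow_mul', sq, sq, ← hK, show 4 * n * (4 * n) = 16 * (n * n) by ring]
  rcases le_or_gt N (16 ^ K) with hN16 | hN16
  · calc (z * z) ^ K * N ≤ (n * n) ^ K * 16 ^ K := by gcongr
      _ = (16 * (n * n)) ^ K := by rw [← mul_pow, mul_comm]
  rcases le_total ((s + 2) * n * z) (n * B * N) with hsmall | hlarge
  · have hzz : z * z ≤ 2 * n * B := Nat.le_of_mul_le_mul_right (by linarith) hN
    calc (z * z) ^ K * N ≤ (2 * n * B) ^ K * N := by gcongr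
      _ = (2 * n) ^ K * (B ^ K * N) := by rw [mul_pow]; ring
      _ ≤ (2 * n) ^ K * (4 * n) ^ K := by gcongr
      _ ≤ (16 * (n * n)) ^ K := by rw [← mul_pow]; exact Nat.pow_le_pow_left (by nlinarith) _
  · refine pow_mul_le_of_mul_le_of_sixteen_pow_lt (Nat.two_pow_pos s) hN16 ?_
    calc z * z * N ≤ 2 * (s + 2) * n * z := by linarith
      _ ≤ 2 * 2 ^ K * n * n := by gcongr; exact Nat.add_two_le_two_pow_two_pow s
      _ = 2 ^ (K + 1) * (n * n) := by ring

theorem le_mul_rpow_neg_inv_of_pow_mul_le {x y N : ℝ} {K : ℕ} (hK : K ≠ 0) (hy : 0 ≤ y)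
    (hN : 0 < N) (h : x ^ K * N ≤ y ^ K) : x ≤ y * N ^ (-1 / K : ℝ) := by
  rw [neg_div, Real.rpow_neg hN.le, ← div_eq_mul_inv, le_div_iff₀ (by positivity)]
  refine le_of_pow_le_pow_left₀ hK hy ?_
  rwa [mul_pow, one_div, Real.rpow_inv_natCast_pow hN.le hK]

theorem Finset.card_mul_card_eq_sum_card_filter_add_mem {G : Type*} [AddGroup G] [Fintype G]
    [DecidableEq G] (Z : Finset G) : #Z * #Z = ∑ d, #{m ∈ Z | m + d ∈ Z} := by
  have hfiber : ∀ m : G, #{d | m + d ∈ Z} = #Z := fun m => by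
    rw [← card_image_of_injective _ (add_right_injective m)]
    congr 1
    ext x
    simp
  calc #Z * #Z = ∑ m ∈ Z, #{d | m + d ∈ Z} := by simp [hfiber]
    _ = ∑ d, #{m ∈ Z | m + d ∈ Z} :=
      sum_card_bipartiteAbove_eq_sum_card_bipartiteBelow (fun m d => m + d ∈ Z)

theorem Finset.card_mul_card_le_of_card_filter_add_mem_le {G : Type*} [AddGroup G] [Fintype G]
    [DecidableEq G] {Z S : Finset G} {B : ℕ} (hB : ∀ d ∉ S, #{m ∈ Z | m + d ∈ Z} ≤ B) :
    #Z * #Z ≤ #S * #Z + Fintype.card G * B := by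
  rw [card_mul_card_eq_sum_card_filter_add_mem, ← sum_sdiff (subset_univ S), add_comm]
  gcongr
  · simpa using sum_le_card_nsmul S _ #Z fun d _ => card_le_card (filter_subset _ _)
  calc ∑ d ∈ univ \ S, #{m ∈ Z | m + d ∈ Z} ≤ #(univ \ S) * B := by
        simpa using sum_le_card_nsmul (univ \ S) _ B fun d hd => hB d (mem_sdiff.1 hd).2
    _ ≤ Fintype.card G * B := Nat.mul_le_mul_right _ (card_le_univ _)

section Exponents

variable {M : Type*} [Monoid M] {n : ℕ} [NeZero n]

theorem pow_val_add_of_pow_eq_one {x : M} (hx : x ^ n = 1) (m m' : ZMod n) :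
    x ^ (m + m').val = x ^ m.val * x ^ m'.val := by
  rw [ZMod.val_add, ← pow_mod_orderOf, Nat.mod_mod_of_dvd _ (orderOf_dvd_of_pow_eq_one hx),
    pow_mod_orderOf, pow_add]

theorem card_filter_pow_val_eq_one_mul_orderOf_le [DecidableEq M] {u : M} (hu : u ^ n = 1) :
    #{d : ZMod n | u ^ d.val = 1} * orderOf u ≤ n := by
  have hdvd : orderOf u ∣ n := orderOf_dvd_of_pow_eq_one hu
  suffices #{d : ZMod n | u ^ d.val = 1} ≤ #(range (n / orderOf u)) by
    rw [card_range] at this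
    exact (Nat.mul_le_mul_right _ this).trans (Nat.div_mul_le_self n _)
  refine card_le_card_of_injOn (fun d => d.val / orderOf u)
    (fun d _ => mem_range.2 (Nat.div_lt_div_of_lt_of_dvd hdvd (ZMod.val_lt d))) ?_
  intro d hd d' hd' (h : d.val / orderOf u = d'.val / orderOf u)
  simp only [coe_filter, mem_univ, true_and, Set.mem_ofPred_eq] at hd hd'
  apply ZMod.val_injective n
  rw [← Nat.div_mul_cancel (orderOf_dvd_of_pow_eq_one hd),
    ← Nat.div_mul_cancel (orderOf_dvd_of_pow_eq_one hd'), h]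

theorem card_filter_exists_pow_val_eq_mul_le {G : Type*} [CommGroup G] [DecidableEq G]
    {ι : Type*} [Fintype ι] {b : ι → G} {x : G} (hb : ∀ i, b i ^ n = 1) (hx : x ^ n = 1)
    {N : ℕ} (hN : ∀ i, N ≤ orderOf (b i / x)) :
    #{d : ZMod n | ∃ i, b i ^ d.val = x ^ d.val} * N ≤ Fintype.card ι * n := by
  have hunion : ({d : ZMod n | ∃ i, b i ^ d.val = x ^ d.val} : Finset _) =
      univ.biUnion fun i => {d : ZMod n | (b i / x) ^ d.val = 1} := by
    ext d
    simp [div_pow, div_eq_one]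
  calc #{d : ZMod n | ∃ i, b i ^ d.val = x ^ d.val} * N
      ≤ (∑ i, #{d : ZMod n | (b i / x) ^ d.val = 1}) * N := by
        rw [hunion]
        exact Nat.mul_le_mul_right _ card_biUnion_le
    _ ≤ ∑ _i : ι, n := by
        rw [sum_mul]
        refine sum_le_sum fun i _ => le_trans (Nat.mul_le_mul_left _ (hN i)) ?_
        exact card_filter_pow_val_eq_one_mul_orderOf_le (by rw [div_pow, hb, hx, div_one])
    _ = Fintype.card ι * n := by simp

end Exponents

section PowerSum

variable {F : Type*} [Field F] {n : ℕ} [NeZero n] {ι : Type*} [Fintype ι]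

variable (n) in
open scoped Classical in
noncomputable def powerSumZeros (c a : ι → Fˣ) : Finset (ZMod n) :=
  {m | ∑ i, (c i : F) * (a i : F) ^ m.val = 0}

theorem mem_powerSumZeros {c a : ι → Fˣ} {m : ZMod n} :
    m ∈ powerSumZeros n c a ↔ ∑ i, (c i : F) * (a i : F) ^ m.val = 0 := by
  simp [powerSumZeros]

theorem ncard_setOf_lt_eq_card_powerSumZeros (c a : ι → Fˣ) :
    {m : ℕ | m < n ∧ ∑ i, (c i : F) * (a i : F) ^ m = 0}.ncard = #(powerSumZeros n c a) := by
  rw [← card_image_of_injective _ (ZMod.val_injective n), ← Set.ncard_coe_finset]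
  congr 1
  ext m
  simp only [Set.mem_ofPred_eq, coe_image, Set.mem_image, mem_coe, mem_powerSumZeros]
  constructor
  · rintro ⟨hm, h⟩
    exact ⟨m, by rwa [ZMod.val_cast_of_lt hm], ZMod.val_cast_of_lt hm⟩
  · rintro ⟨m, h, rfl⟩
    exact ⟨m.val_lt, h⟩

theorem card_powerSumZeros_two_mul_orderOf_le {c a : Fin 2 → Fˣ} (ha : ∀ i, a i ^ n = 1) :
    #(powerSumZeros n c a) * orderOf (a 0 / a 1) ≤ n := by
  classical
  set u := a 0 / a 1
  have hu : u ^ n = 1 := by rw [div_pow, ha, ha, div_one]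
  obtain hZ | ⟨m₀, hm₀⟩ := (powerSumZeros n c a).eq_empty_or_nonempty
  · simp [hZ]
  have hval : ∀ m ∈ powerSumZeros n c a, ((u ^ m.val : Fˣ) : F) = -c 1 / c 0 := by
    intro m hm
    rw [mem_powerSumZeros, Fin.sum_univ_two] at hm
    rw [Units.val_pow_eq_pow_val, Units.val_div_eq_div_val, div_pow, eq_div_iff (c 0).ne_zero,
      div_mul_eq_mul_div, div_eq_iff (pow_ne_zero _ (a 1).ne_zero)]
    linear_combination hm
  have hker : ∀ m ∈ powerSumZeros n c a, u ^ (m - m₀).val = 1 := by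
    intro m hm
    have h := pow_val_add_of_pow_eq_one hu (m - m₀) m₀
    rw [sub_add_cancel, Units.ext_iff.2 ((hval m hm).trans (hval m₀ hm₀).symm)] at h
    exact right_eq_mul.1 h
  calc #(powerSumZeros n c a) * orderOf u ≤ #{d : ZMod n | u ^ d.val = 1} * orderOf u := by
        refine Nat.mul_le_mul_right _
          (card_le_card_of_injOn (· - m₀) (fun m hm => ?_) fun _ _ _ _ => sub_left_inj.1)
        simpa using hker m hm
    _ ≤ n := card_filter_pow_val_eq_one_mul_orderOf_le hu

theorem exists_filter_add_mem_powerSumZeros_subset {r : ℕ} {c a : Fin (r + 1) → Fˣ}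
    (ha : ∀ i, a i ^ n = 1) {d : ZMod n}
    (hd : ∀ i : Fin r, a i.castSucc ^ d.val ≠ a (Fin.last r) ^ d.val) :
    ∃ c' : Fin r → Fˣ, {m ∈ powerSumZeros n c a | m + d ∈ powerSumZeros n c a} ⊆
      powerSumZeros n c' fun i => a i.castSucc := by
  have hsub : ∀ i : Fin r, (a i.castSucc : F) ^ d.val - (a (Fin.last r) : F) ^ d.val ≠ 0 :=
    fun i => by simpa [sub_eq_zero, ← Units.val_pow_eq_pow_val, Units.val_inj] using hd i
  refine ⟨fun i => c i.castSucc * Units.mk0 _ (hsub i), ?_⟩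
  intro m hm
  rw [mem_filter, mem_powerSumZeros, mem_powerSumZeros] at hm
  obtain ⟨hm, hmd⟩ := hm
  have hshift : ∀ i, (a i : F) ^ (m + d).val = (a i : F) ^ m.val * (a i : F) ^ d.val :=
    fun i => by simpa using congrArg Units.val (pow_val_add_of_pow_eq_one (ha i) m d)
  -- Subtracting `a_last ^ d` times the relation at `m` from the one at `m + d` kills the last term.
  have hcomb : ∑ i, (c i : F) * (a i : F) ^ m.val *
      ((a i : F) ^ d.val - (a (Fin.last r) : F) ^ d.val) = 0 :=
    calc _ = ∑ i, (c i : F) * (a i : F) ^ (m + d).val -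
          (a (Fin.last r) : F) ^ d.val * ∑ i, (c i : F) * (a i : F) ^ m.val := by
          rw [mul_sum, ← sum_sub_distrib]
          exact sum_congr rfl fun i _ => by rw [hshift]; ring
      _ = 0 := by rw [hmd, hm, mul_zero, sub_zero]
  rw [Fin.sum_univ_castSucc, sub_self, mul_zero, add_zero] at hcomb
  rw [mem_powerSumZeros, ← hcomb]
  exact sum_congr rfl fun i _ => by simp only [Units.val_mul, Units.val_mk0]; ring

theorem card_powerSumZeros_pow_mul_le (s : ℕ) {c a : Fin (s + 2) → Fˣ}
    (ha : ∀ i, a i ^ n = 1) {N : ℕ} (hN : 0 < N)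
    (hNa : ∀ i j, i ≠ j → N ≤ orderOf (a i / a j)) :
    #(powerSumZeros n c a) ^ 2 ^ s * N ≤ (4 * n) ^ 2 ^ s := by
  induction s with
  | zero =>
    calc #(powerSumZeros n c a) ^ 2 ^ 0 * N ≤ #(powerSumZeros n c a) * orderOf (a 0 / a 1) := by
          rw [pow_zero, pow_one]
          exact Nat.mul_le_mul_left _ (hNa 0 1 (by decide))
      _ ≤ n := card_powerSumZeros_two_mul_orderOf_le ha
      _ ≤ (4 * n) ^ 2 ^ 0 := by rw [pow_zero, pow_one]; omega
  | succ s ih =>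
    classical
    set Z := powerSumZeros n c a
    set bad : Finset (ZMod n) :=
      {d | ∃ i : Fin (s + 2), a i.castSucc ^ d.val = a (Fin.last _) ^ d.val}
    set B := (univ \ bad).sup fun d => #{m ∈ Z | m + d ∈ Z}
    have hB : B ^ 2 ^ s * N ≤ (4 * n) ^ 2 ^ s := by
      refine sup_induction (p := fun b => b ^ 2 ^ s * N ≤ (4 * n) ^ 2 ^ s)
        (by simp) (fun b₁ h₁ b₂ h₂ => ?_) fun d hd => ?_
      · exact max_rec' (fun b => b ^ 2 ^ s * N ≤ (4 * n) ^ 2 ^ s) h₁ h₂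
      simp only [bad, mem_sdiff, mem_univ, mem_filter, true_and, not_exists] at hd
      obtain ⟨c', hc'⟩ := exists_filter_add_mem_powerSumZeros_subset ha hd
      calc #{m ∈ Z | m + d ∈ Z} ^ 2 ^ s * N
          ≤ #(powerSumZeros n c' fun i => a i.castSucc) ^ 2 ^ s * N := by gcongr
        _ ≤ (4 * n) ^ 2 ^ s :=
            ih (fun i => ha _) fun i j hij => hNa _ _ (Fin.castSucc_injective _ |>.ne hij)
    have hbad : #bad * N ≤ (s + 2) * n := by
      have h := card_filter_exists_pow_val_eq_mul_le (N := N) (b := fun i => a i.castSucc)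
        (fun i => ha _) (ha _) fun i => hNa _ _ (Fin.castSucc_lt_last i).ne
      rw [Fintype.card_fin] at h
      convert h
    have hsq : #Z * #Z ≤ #bad * #Z + n * B := by
      simpa using card_mul_card_le_of_card_filter_add_mem_le (Z := Z) (S := bad) (B := B)
        fun d hd =>
          le_sup (f := fun d => #{m ∈ Z | m + d ∈ Z}) (mem_sdiff.2 ⟨mem_univ d, hd⟩)
    refine pow_two_pow_succ_mul_le_of_sq_mul_le hN ((card_le_univ Z).trans (ZMod.card n).le) hB ?_
    calc #Z * #Z * N ≤ (#bad * #Z + n * B) * N := Nat.mul_le_mul_right _ hsq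
      _ = #bad * N * #Z + n * B * N := by ring
      _ ≤ (s + 2) * n * #Z + n * B * N := by gcongr

end PowerSum

/-- **Lemma (`lem:finitefield`, after Corvaja–Zannier).**
Let `𝔽_q` be a finite field with `q` elements, let `r ≥ 2`, let
`c₁, …, c_r, a₁, …, a_r ∈ 𝔽_q^*` and let `N` be the minimum of the multiplicative
orders of the `a i / a j` (`i ≠ j`) in `𝔽_q^*`. Then the number of integers
`m ∈ [0, q-2]` with `∑ i, c i * (a i)^m = 0` is at most `4(q-1)·N^(-1/2^(r-2))`. -/
theorem finite_field_zeros (q r : ℕ) (hr : 2 ≤ r)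
    (F : Type) [Field F] [Fintype F] (hq : Fintype.card F = q)
    (c a : Fin r → Fˣ) (N : ℕ)
    (hN_le : ∀ i j : Fin r, i ≠ j → N ≤ orderOf (a i / a j))
    (hN_mem : ∃ i j : Fin r, i ≠ j ∧ N = orderOf (a i / a j)) :
    (({m : ℕ | m ≤ q - 2 ∧ ∑ i, (c i : F) * (a i : F) ^ m = 0}).ncard : ℝ) ≤
      4 * ((q : ℝ) - 1) * (N : ℝ) ^ (-(1 : ℝ) / 2 ^ (r - 2)) := by
  classical
  obtain ⟨s, rfl⟩ : ∃ s, r = s + 2 := ⟨r - 2, by omega⟩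
  obtain ⟨i, j, -, hNij⟩ := hN_mem
  have hN : 0 < N := hNij ▸ orderOf_pos _
  have hq2 : 2 ≤ q := hq ▸ Fintype.one_lt_card
  have hcard : Fintype.card Fˣ = q - 1 := by rw [Fintype.card_units, hq]
  have : NeZero (q - 1) := ⟨hcard ▸ Fintype.card_ne_zero⟩
  have hbound :=
    card_powerSumZeros_pow_mul_le s (c := c) (fun i => hcard ▸ pow_card_eq_one) hN hN_le
  have hzeros : {m : ℕ | m ≤ q - 2 ∧ ∑ i, (c i : F) * (a i : F) ^ m = 0} =
      {m : ℕ | m < q - 1 ∧ ∑ i, (c i : F) * (a i : F) ^ m = 0} := by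
    ext m
    exact and_congr_left fun _ => by omega
  rw [hzeros, ncard_setOf_lt_eq_card_powerSumZeros, Nat.add_sub_cancel,
    show (q : ℝ) - 1 = ((q - 1 : ℕ) : ℝ) by rw [Nat.cast_sub (by omega), Nat.cast_one]]
  exact_mod_cast le_mul_rpow_neg_inv_of_pow_mul_le (Nat.two_pow_pos s).ne' (by positivity)
    (Nat.cast_pos.2 hN) (by exact_mod_cast hbound)
end

section
/- Let $g$ be a multiplicative arithmetic function supported on squarefree numbers (i.e., $g(n) = 0$ whenever $n$ is not squarefree), and let $\Lambda_g$ be its associated von Mangoldt function. Then for every prime $p$ and every integer $s \geq 1$, $\Lambda_g(p^s) = -(-g(p))^s \log p$. -/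
open scoped BigOperators

/-- If `g` is a multiplicative function supported on squarefree numbers, then its
associated von Mangoldt function `Λ_g` (i.e. the unique arithmetic function with
`∑_{d ∣ n} g(n/d) Λ_g(d) = g(n) log n`) satisfies
`Λ_g(p^s) = -(-g(p))^s · log p` for every prime `p` and every `s ≥ 1`. -/
theorem vonMangoldt_of_squarefree_supported (g Λ : ℕ → ℂ)
    (hg1 : g 1 = 1)
    (hgmul : ∀ m n : ℕ, Nat.Coprime m n → g (m * n) = g m * g n)
    (hsf : ∀ n : ℕ, ¬ Squarefree n → g n = 0)
    (hΛ : ∀ n : ℕ, 0 < n → ∑ d ∈ n.divisors, g (n / d) * Λ d = g n * (Real.log n : ℂ)) :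
    ∀ p : ℕ, p.Prime → ∀ s : ℕ, 1 ≤ s →
      Λ (p ^ s) = -(-g p) ^ s * (Real.log p : ℂ) := by
  intro p hp
  have hΛ1 : Λ 1 = 0 := by
    have := hΛ 1 one_pos
    simp [hg1] at this
    exact this
  -- g (p^k) = 0 for k ≥ 2
  have hg0 : ∀ k : ℕ, 2 ≤ k → g (p ^ k) = 0 := by
    intro k hk
    apply hsf
    intro hsq
    have : p * p ∣ p ^ k := by
      rw [← sq]
      exact pow_dvd_pow p hk
    exact hp.one_lt.ne' (Nat.isUnit_iff.mp (hsq p this))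
  -- the key identity for n = p^m
  have key : ∀ m : ℕ, ∑ i ∈ Finset.range (m + 1), g (p ^ (m - i)) * Λ (p ^ i)
      = g (p ^ m) * (Real.log ((p : ℝ) ^ m) : ℂ) := by
    intro m
    have h := hΛ (p ^ m) (pow_pos hp.pos m)
    rw [Nat.divisors_prime_pow hp, Finset.sum_map] at h
    simp only [Function.Embedding.coeFn_mk, Nat.cast_pow] at h
    rw [← h]
    apply Finset.sum_congr rfl
    intro i hi
    rw [Nat.pow_div (Nat.lt_succ_iff.mp (Finset.mem_range.mp hi)) hp.pos]
  have base : Λ p = -(-g p) * (Real.log p : ℂ) := by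
    have h := key 1
    rw [Finset.sum_range_succ, Finset.sum_range_one] at h
    simp only [Nat.sub_self, Nat.sub_zero, pow_zero, pow_one, hg1, one_mul, hΛ1, mul_zero,
      add_zero, zero_add] at h
    rw [h]; ring
  -- main induction: statement for s+1
  have main : ∀ s : ℕ, Λ (p ^ (s + 1)) = -(-g p) ^ (s + 1) * (Real.log p : ℂ) := by
    intro s
    induction s with
    | zero => simpa using base
    | succ s ih =>
      have h := key (s + 2)
      rw [Finset.sum_range_succ, Finset.sum_range_succ] at h
      have hz : ∑ i ∈ Finset.range (s + 1), g (p ^ (s + 2 - i)) * Λ (p ^ i) = 0 := by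
        apply Finset.sum_eq_zero
        intro i hi
        have := Finset.mem_range.mp hi
        rw [hg0 (s + 2 - i) (by omega), zero_mul]
      have h2 : (s + 2 : ℕ) - (s + 1) = 1 := by omega
      rw [hz, h2, hg0 (s + 2) (by omega)] at h
      simp only [Nat.sub_self, pow_zero, hg1, one_mul, pow_one, zero_add, zero_mul] at h
      have : Λ (p ^ (s + 2)) = -g p * Λ (p ^ (s + 1)) := by linear_combination h
      rw [this, ih]; ring
  intro s hs
  obtain ⟨t, rfl⟩ := Nat.exists_eq_add_of_le hs
  rw [add_comm]
  exact main t
end
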